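/- arXiv:1502.07908 — 4 statements merged into one kernel-verified Lean document; each statement's English description precedes it below -/
import Mathlib

section
/- Let a, b, c > 0 with 0 < φ_{H³}(a,b,c) ≤ 1/8, where φ_{H³}(a,b,c) = ((a−b)² + (a−c)² + (b−c)²)/(a+b+c)². Then with w = φ_{H³} and F(a,b,c) = (a+b+c)³, the constant term C_w(a,b,c) := a·w_a·(a²F_a + b²F_b + c²F_c + a(F − aF_a − bF_b − cF_c)) + b·w_b·(a²F_a + b²F_b + c²F_c + b(F − aF_a − bF_b − cF_c)) + c·w_c·(a²F_a + b²F_b + c²F_c + c(F − aF_a − bF_b − cF_c)) is non-positive. -/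
/-- `φ_{H³}(a,b,c) = ((a−b)² + (a−c)² + (b−c)²)/(a+b+c)²`. -/
noncomputable def phiH3 (a b c : ℝ) : ℝ :=
  ((a - b) ^ 2 + (a - c) ^ 2 + (b - c) ^ 2) / (a + b + c) ^ 2

/-- Partial derivative with respect to the first variable. -/
noncomputable def p1 (f : ℝ → ℝ → ℝ → ℝ) (a b c : ℝ) : ℝ := deriv (fun x => f x b c) a

/-- Partial derivative with respect to the second variable. -/
noncomputable def p2 (f : ℝ → ℝ → ℝ → ℝ) (a b c : ℝ) : ℝ := deriv (fun y => f a y c) b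

/-- Partial derivative with respect to the third variable. -/
noncomputable def p3 (f : ℝ → ℝ → ℝ → ℝ) (a b c : ℝ) : ℝ := deriv (fun z => f a b z) c

/-- The constant term `C_w` of the linear operator `L` for normal velocity `F`. -/
noncomputable def Cterm (w F : ℝ → ℝ → ℝ → ℝ) (a b c : ℝ) : ℝ :=
  a * p1 w a b c * (a ^ 2 * p1 F a b c + b ^ 2 * p2 F a b c + c ^ 2 * p3 F a b c
      + a * (F a b c - a * p1 F a b c - b * p2 F a b c - c * p3 F a b c))
  + b * p2 w a b c * (a ^ 2 * p1 F a b c + b ^ 2 * p2 F a b c + c ^ 2 * p3 F a b c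
      + b * (F a b c - a * p1 F a b c - b * p2 F a b c - c * p3 F a b c))
  + c * p3 w a b c * (a ^ 2 * p1 F a b c + b ^ 2 * p2 F a b c + c ^ 2 * p3 F a b c
      + c * (F a b c - a * p1 F a b c - b * p2 F a b c - c * p3 F a b c))

/-- The gradient term `E_w` of the linear operator `L` for normal velocity `F`. -/
noncomputable def Eterm (w F : ℝ → ℝ → ℝ → ℝ) (a b c : ℝ) : ℝ :=
  2 * ((p3 w a b c * (p1 F a b c - p2 F a b c)
          - p3 F a b c * (p1 w a b c - p2 w a b c)) / (a - b)
     + (p2 w a b c * (p1 F a b c - p3 F a b c)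
          - p2 F a b c * (p1 w a b c - p3 w a b c)) / (a - c)
     + (p1 w a b c * (p2 F a b c - p3 F a b c)
          - p1 F a b c * (p2 w a b c - p3 w a b c)) / (b - c))

lemma p1_phi (a b c : ℝ) (hs : a + b + c ≠ 0) :
    p1 phiH3 a b c =
      (2*(2*a - b - c)*(a + b + c) - 2*((a - b)^2 + (a - c)^2 + (b - c)^2)) / (a + b + c)^3 := by
  have h1 : HasDerivAt (fun x : ℝ => (x - b)^2 + (x - c)^2 + (b - c)^2)
      (2*(a-b) + 2*(a-c)) a := by
    have hb := (((hasDerivAt_id a).sub_const b).pow 2)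
    have hc' := (((hasDerivAt_id a).sub_const c).pow 2)
    have := (hb.add hc').add_const ((b-c)^2)
    exact this.congr_deriv (by simp only [id_eq]; norm_num)
  have h2 : HasDerivAt (fun x : ℝ => (x + b + c)^2) (2*(a+b+c)) a := by
    have := (((hasDerivAt_id a).add_const b).add_const c).pow 2
    exact this.congr_deriv (by simp only [id_eq]; norm_num)
  have hden : (a + b + c)^2 ≠ 0 := pow_ne_zero 2 hs
  have h3 : HasDerivAt (fun x : ℝ => ((x - b)^2 + (x - c)^2 + (b - c)^2) / (x + b + c)^2) _ a :=
    h1.div h2 hden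
  have hfun : (fun x => phiH3 x b c)
      = fun x : ℝ => ((x - b)^2 + (x - c)^2 + (b - c)^2) / (x + b + c)^2 := rfl
  rw [p1, hfun, h3.deriv]
  field_simp
  ring

lemma phi_symm12 (a b c : ℝ) : phiH3 a b c = phiH3 b a c := by
  unfold phiH3; ring_nf

lemma phi_symm13 (a b c : ℝ) : phiH3 a b c = phiH3 c b a := by
  unfold phiH3; ring_nf

lemma p2_phi (a b c : ℝ) (hs : a + b + c ≠ 0) :
    p2 phiH3 a b c =
      (2*(2*b - a - c)*(a + b + c) - 2*((a - b)^2 + (a - c)^2 + (b - c)^2)) / (a + b + c)^3 := by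
  have hfun : (fun y => phiH3 a y c) = fun y => phiH3 y a c := by
    funext y; exact phi_symm12 a y c
  have : p2 phiH3 a b c = p1 phiH3 b a c := by rw [p2, p1, hfun]
  have hs' : b + a + c ≠ 0 := fun h => hs (by linarith)
  rw [this, p1_phi b a c hs']
  ring_nf

lemma p3_phi (a b c : ℝ) (hs : a + b + c ≠ 0) :
    p3 phiH3 a b c =
      (2*(2*c - a - b)*(a + b + c) - 2*((a - b)^2 + (a - c)^2 + (b - c)^2)) / (a + b + c)^3 := by
  have hfun : (fun z => phiH3 a b z) = fun z => phiH3 z b a := by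
    funext z; exact phi_symm13 a b z
  have : p3 phiH3 a b c = p1 phiH3 c b a := by rw [p3, p1, hfun]
  have hs' : c + b + a ≠ 0 := fun h => hs (by linarith)
  rw [this, p1_phi c b a hs']
  ring_nf

lemma p1_F (a b c : ℝ) :
    p1 (fun a b c => (a + b + c)^3) a b c = 3*(a+b+c)^2 := by
  have h : HasDerivAt (fun x : ℝ => (x + b + c)^3) (3*(a+b+c)^2) a := by
    have := (((hasDerivAt_id a).add_const b).add_const c).pow 3
    exact this.congr_deriv (by simp only [id_eq]; norm_num)
  rw [p1]
  exact h.deriv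

lemma p2_F (a b c : ℝ) :
    p2 (fun a b c => (a + b + c)^3) a b c = 3*(a+b+c)^2 := by
  have h : HasDerivAt (fun y : ℝ => (a + y + c)^3) (3*(a+b+c)^2) b := by
    have := (((hasDerivAt_id b).const_add a).add_const c).pow 3
    exact this.congr_deriv (by simp only [id_eq]; norm_num)
  rw [p2]
  exact h.deriv

lemma p3_F (a b c : ℝ) :
    p3 (fun a b c => (a + b + c)^3) a b c = 3*(a+b+c)^2 := by
  have h : HasDerivAt (fun z : ℝ => (a + b + z)^3) (3*(a+b+c)^2) c := by
    have := ((hasDerivAt_id c).const_add (a + b)).pow 3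
    have h2 : (fun z : ℝ => (a + b + z)^3) = fun z : ℝ => (a + b + id z)^3 := rfl
    rw [h2]
    exact this.congr_deriv (by simp only [id_eq]; norm_num)
  rw [p3]
  exact h.deriv

/-- On the set `{0 < φ_{H³} ≤ 1/8}`, the constant term of the linear operator `L`
for `w = φ_{H³}` and `F = H³ = (a+b+c)³` is non-positive. -/
theorem Cterm_phiH3_nonpos (a b c : ℝ) (ha : 0 < a) (hb : 0 < b) (hc : 0 < c)
    (hphi0 : 0 < phiH3 a b c) (hphi : phiH3 a b c ≤ 1 / 8) :
    Cterm phiH3 (fun a b c => (a + b + c) ^ 3) a b c ≤ 0 := by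
  have hs : (0:ℝ) < a + b + c := by linarith
  have hsne : a + b + c ≠ 0 := ne_of_gt hs
  have h8 : 8 * ((a-b)^2 + (a-c)^2 + (b-c)^2) ≤ (a+b+c)^2 := by
    have := hphi
    rw [phiH3, div_le_iff₀ (by positivity)] at this
    linarith
  have key : Cterm phiH3 (fun a b c => (a + b + c) ^ 3) a b c
      = 4 * ((a^2+b^2+c^2) * ((a-b)^2 + (a-c)^2 + (b-c)^2)
          - (a+b+c) * ((a+b)*(a-b)^2 + (a+c)*(a-c)^2 + (b+c)*(b-c)^2)) := by
    rw [Cterm, p1_phi a b c hsne, p2_phi a b c hsne, p3_phi a b c hsne,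
      p1_F, p2_F, p3_F]
    field_simp
    ring
  rw [key]
  have hineq : (a^2+b^2+c^2) * ((a-b)^2 + (a-c)^2 + (b-c)^2)
      ≤ (a+b+c) * ((a+b)*(a-b)^2 + (a+c)*(a-c)^2 + (b+c)*(b-c)^2) := by
    nlinarith [sq_nonneg (a-b), sq_nonneg (a-c), sq_nonneg (b-c), mul_pos ha hb,
      mul_pos ha hc, mul_pos hb hc, sq_nonneg (a+b-2*c), sq_nonneg (a+c-2*b),
      sq_nonneg (b+c-2*a), mul_pos (mul_pos ha hb) hc]
  linarith
end

section
/- Let a, b, c > 0 be pairwise distinct with 0 < φ_{H³}(a,b,c) ≤ 1/8, where φ_{H³}(a,b,c) = ((a−b)² + (a−c)² + (b−c)²)/(a+b+c)². Then with w = φ_{H³} and F(a,b,c) = (a+b+c)³, the gradient term E_w(a,b,c) := 2·( (w_c(F_a−F_b) − F_c(w_a−w_b))/(a−b) + (w_b(F_a−F_c) − F_b(w_a−w_c))/(a−c) + (w_a(F_b−F_c) − F_a(w_b−w_c))/(b−c) ) is non-positive. -/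
lemma cube_deriv (u : ℝ) (v : ℝ) :
    deriv (fun x : ℝ => (x + v) ^ 3) u = 3 * (u + v) ^ 2 := by
  have h : HasDerivAt (fun x : ℝ => (x + v) ^ 3) (3 * (u + v) ^ (3 - 1) * 1) u :=
    ((hasDerivAt_id u).add_const v).pow 3
  simpa using h.deriv

lemma phi_deriv (u p q : ℝ) (h : u + p + q ≠ 0) :
    deriv (fun x : ℝ => ((x - p) ^ 2 + (x - q) ^ 2 + (p - q) ^ 2) / (x + p + q) ^ 2) u
      = ((2 * (u - p) + 2 * (u - q)) * (u + p + q) ^ 2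
          - ((u - p) ^ 2 + (u - q) ^ 2 + (p - q) ^ 2) * (2 * (u + p + q))) /
        ((u + p + q) ^ 2) ^ 2 := by
  have hN : HasDerivAt (fun x : ℝ => (x - p) ^ 2 + (x - q) ^ 2 + (p - q) ^ 2)
      (2 * (u - p) + 2 * (u - q)) u := by
    have h1 : HasDerivAt (fun x : ℝ => (x - p) ^ 2) (2 * (u - p) ^ (2 - 1) * 1) u :=
      ((hasDerivAt_id u).sub_const p).pow 2
    have h2 : HasDerivAt (fun x : ℝ => (x - q) ^ 2) (2 * (u - q) ^ (2 - 1) * 1) u :=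
      ((hasDerivAt_id u).sub_const q).pow 2
    simpa using (h1.add h2).add_const ((p - q) ^ 2)
  have hD : HasDerivAt (fun x : ℝ => (x + p + q) ^ 2) (2 * (u + p + q)) u := by
    have h1 : HasDerivAt (fun x : ℝ => (x + (p + q)) ^ 2) (2 * (u + (p + q)) ^ (2 - 1) * 1) u :=
      ((hasDerivAt_id u).add_const (p + q)).pow 2
    have heq : (fun x : ℝ => (x + (p + q)) ^ 2) = fun x : ℝ => (x + p + q) ^ 2 := by
      funext x; ring
    rw [heq] at h1
    simpa [add_assoc] using h1
  have hD' : (u + p + q) ^ 2 ≠ 0 := pow_ne_zero _ h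
  exact (hN.div hD hD').deriv

/-- For pairwise distinct `a, b, c > 0` with `0 < φ_{H³} ≤ 1/8`, the gradient term
`E_w` of the linear operator `L` for `w = φ_{H³}` and `F = H³ = (a+b+c)³` is
non-positive. -/
theorem Eterm_phiH3_nonpos (a b c : ℝ) (ha : 0 < a) (hb : 0 < b) (hc : 0 < c)
    (hab : a ≠ b) (hac : a ≠ c) (hbc : b ≠ c)
    (hphi0 : 0 < phiH3 a b c) (hphi : phiH3 a b c ≤ 1 / 8) :
    Eterm phiH3 (fun a b c => (a + b + c) ^ 3) a b c ≤ 0 := by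
  have hs : a + b + c ≠ 0 := by positivity
  have h1 : a - b ≠ 0 := sub_ne_zero.mpr hab
  have h2 : a - c ≠ 0 := sub_ne_zero.mpr hac
  have h3 : b - c ≠ 0 := sub_ne_zero.mpr hbc
  have hP1F : p1 (fun a b c => (a + b + c) ^ 3) a b c = 3 * (a + b + c) ^ 2 := by
    unfold p1
    have : (fun x : ℝ => (x + b + c) ^ 3) = fun x : ℝ => (x + (b + c)) ^ 3 := by
      funext x; ring
    rw [this, cube_deriv]; ring
  have hP2F : p2 (fun a b c => (a + b + c) ^ 3) a b c = 3 * (a + b + c) ^ 2 := by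
    unfold p2
    have : (fun y : ℝ => (a + y + c) ^ 3) = fun y : ℝ => (y + (a + c)) ^ 3 := by
      funext y; ring
    rw [this, cube_deriv]; ring
  have hP3F : p3 (fun a b c => (a + b + c) ^ 3) a b c = 3 * (a + b + c) ^ 2 := by
    unfold p3
    have : (fun z : ℝ => (a + b + z) ^ 3) = fun z : ℝ => (z + (a + b)) ^ 3 := by
      funext z; ring
    rw [this, cube_deriv]; ring
  have hP1w : p1 phiH3 a b c =
      ((2 * (a - b) + 2 * (a - c)) * (a + b + c) ^ 2
        - ((a - b) ^ 2 + (a - c) ^ 2 + (b - c) ^ 2) * (2 * (a + b + c))) /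
      ((a + b + c) ^ 2) ^ 2 := by
    unfold p1 phiH3
    exact phi_deriv a b c hs
  have hP2w : p2 phiH3 a b c =
      ((2 * (b - a) + 2 * (b - c)) * (b + a + c) ^ 2
        - ((b - a) ^ 2 + (b - c) ^ 2 + (a - c) ^ 2) * (2 * (b + a + c))) /
      ((b + a + c) ^ 2) ^ 2 := by
    unfold p2 phiH3
    have : (fun y : ℝ => ((a - y) ^ 2 + (a - c) ^ 2 + (y - c) ^ 2) / (a + y + c) ^ 2)
        = fun y : ℝ => ((y - a) ^ 2 + (y - c) ^ 2 + (a - c) ^ 2) / (y + a + c) ^ 2 := by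
      funext y; ring
    rw [this]
    exact phi_deriv b a c (by intro h; apply hs; linarith)
  have hP3w : p3 phiH3 a b c =
      ((2 * (c - a) + 2 * (c - b)) * (c + a + b) ^ 2
        - ((c - a) ^ 2 + (c - b) ^ 2 + (a - b) ^ 2) * (2 * (c + a + b))) /
      ((c + a + b) ^ 2) ^ 2 := by
    unfold p3 phiH3
    have : (fun z : ℝ => ((a - b) ^ 2 + (a - z) ^ 2 + (b - z) ^ 2) / (a + b + z) ^ 2)
        = fun z : ℝ => ((z - a) ^ 2 + (z - b) ^ 2 + (a - b) ^ 2) / (z + a + b) ^ 2 := by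
      funext z; ring
    rw [this]
    exact phi_deriv c a b (by intro h; apply hs; linarith)
  have key : Eterm phiH3 (fun a b c => (a + b + c) ^ 3) a b c = -108 := by
    unfold Eterm
    rw [hP1F, hP2F, hP3F, hP1w, hP2w, hP3w]
    field_simp
    ring
  rw [key]; norm_num
end

section
/- Let a, b, c > 0 be pairwise distinct with 0 < φ_{H³}(a,b,c) ≤ 1/8, where φ_{H³}(a,b,c) = ((a−b)² + (a−c)² + (b−c)²)/(a+b+c)². Then with w = ψ_{H³}, where ψ_{H³}(a,b,c) = ((a−b)²/(ab)² + (a−c)²/(ac)² + (b−c)²/(bc)²)·((a+b+c)³)², and F(a,b,c) = (a+b+c)³, the gradient term E_w(a,b,c) := 2·( (w_c(F_a−F_b) − F_c(w_a−w_b))/(a−b) + (w_b(F_a−F_c) − F_b(w_a−w_c))/(a−c) + (w_a(F_b−F_c) − F_a(w_b−w_c))/(b−c) ) is non-positive. -/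
/-- `ψ_{H³}(a,b,c) = ((a−b)²/(ab)² + (a−c)²/(ac)² + (b−c)²/(bc)²)·((a+b+c)³)²`. -/
noncomputable def psiH3 (a b c : ℝ) : ℝ :=
  ((a - b) ^ 2 / (a * b) ^ 2 + (a - c) ^ 2 / (a * c) ^ 2 + (b - c) ^ 2 / (b * c) ^ 2) *
    ((a + b + c) ^ 3) ^ 2

set_option maxHeartbeats 2000000

/-- For pairwise distinct `a, b, c > 0` with `0 < φ_{H³} ≤ 1/8`, the gradient term
`E_w` of the linear operator `L` for `w = ψ_{H³}` and `F = H³ = (a+b+c)³` is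
non-positive. -/
theorem Eterm_psiH3_nonpos (a b c : ℝ) (ha : 0 < a) (hb : 0 < b) (hc : 0 < c)
    (hab : a ≠ b) (hac : a ≠ c) (hbc : b ≠ c)
    (hphi0 : 0 < phiH3 a b c) (hphi : phiH3 a b c ≤ 1 / 8) :
    Eterm psiH3 (fun a b c => (a + b + c) ^ 3) a b c ≤ 0 := by
  have ha0 : a ≠ 0 := ha.ne'
  have hb0 : b ≠ 0 := hb.ne'
  have hc0 : c ≠ 0 := hc.ne'
  -- partial derivatives of F = (a+b+c)^3
  have f1 : p1 (fun a b c : ℝ => (a + b + c) ^ 3) a b c = 3 * (a + b + c) ^ 2 := by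
    have h : HasDerivAt (fun x : ℝ => (x + b + c) ^ 3) (3 * (a + b + c) ^ 2) a := by
      have h' : HasDerivAt (fun x : ℝ => (x + b + c) ^ 3) _ a := (((hasDerivAt_id a).add_const b).add_const c).fun_pow 3
      convert h' using 1
      simp only [id_eq]
      push_cast
      ring
    exact h.deriv
  have f2 : p2 (fun a b c : ℝ => (a + b + c) ^ 3) a b c = 3 * (a + b + c) ^ 2 := by
    have h : HasDerivAt (fun y : ℝ => (a + y + c) ^ 3) (3 * (a + b + c) ^ 2) b := by
      have h' : HasDerivAt (fun y : ℝ => (a + y + c) ^ 3) _ b := (((hasDerivAt_id b).const_add a).add_const c).fun_pow 3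
      convert h' using 1
      simp only [id_eq]
      push_cast
      ring
    exact h.deriv
  have f3 : p3 (fun a b c : ℝ => (a + b + c) ^ 3) a b c = 3 * (a + b + c) ^ 2 := by
    have h : HasDerivAt (fun z : ℝ => (a + b + z) ^ 3) (3 * (a + b + c) ^ 2) c := by
      have h' : HasDerivAt (fun z : ℝ => (a + b + z) ^ 3) _ c := ((hasDerivAt_id c).const_add (a + b)).fun_pow 3
      convert h' using 1
      simp only [id_eq]
      push_cast
      ring
    exact h.deriv
  -- partial derivatives of psiH3
  have H1 : HasDerivAt (fun x => psiH3 x b c)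
      ((2 * (a - b) / (a ^ 3 * b) + 2 * (a - c) / (a ^ 3 * c)) * ((a + b + c) ^ 3) ^ 2
        + ((a - b) ^ 2 / (a * b) ^ 2 + (a - c) ^ 2 / (a * c) ^ 2 + (b - c) ^ 2 / (b * c) ^ 2)
          * (6 * (a + b + c) ^ 5)) a := by
    have h : HasDerivAt (fun x => ((x - b) ^ 2 / (x * b) ^ 2 + (x - c) ^ 2 / (x * c) ^ 2 + (b - c) ^ 2 / (b * c) ^ 2) * ((x + b + c) ^ 3) ^ 2) _ a := (((((hasDerivAt_id a).sub_const b).fun_pow 2).fun_div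
        (((hasDerivAt_id a).mul_const b).fun_pow 2) (by positivity)).fun_add
        ((((hasDerivAt_id a).sub_const c).fun_pow 2).fun_div
        (((hasDerivAt_id a).mul_const c).fun_pow 2) (by positivity))).add_const
        ((b - c) ^ 2 / (b * c) ^ 2) |>.fun_mul
        ((((((hasDerivAt_id a).add_const b).add_const c).fun_pow 3).fun_pow 2))
    unfold psiH3
    convert h using 1
    simp only [id_eq]
    field_simp
    ring
  have H2 : HasDerivAt (fun y => psiH3 a y c)
      ((2 * (b - a) / (b ^ 3 * a) + 2 * (b - c) / (b ^ 3 * c)) * ((a + b + c) ^ 3) ^ 2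
        + ((a - b) ^ 2 / (a * b) ^ 2 + (a - c) ^ 2 / (a * c) ^ 2 + (b - c) ^ 2 / (b * c) ^ 2)
          * (6 * (a + b + c) ^ 5)) b := by
    have h : HasDerivAt (fun y => ((a - y) ^ 2 / (a * y) ^ 2 + (a - c) ^ 2 / (a * c) ^ 2 + (y - c) ^ 2 / (y * c) ^ 2) * ((a + y + c) ^ 3) ^ 2) _ b := (((((hasDerivAt_id b).const_sub a).fun_pow 2).fun_div
        (((hasDerivAt_id b).const_mul a).fun_pow 2) (by positivity)).add_const
        ((a - c) ^ 2 / (a * c) ^ 2)).fun_add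
        ((((hasDerivAt_id b).sub_const c).fun_pow 2).fun_div
        (((hasDerivAt_id b).mul_const c).fun_pow 2) (by positivity)) |>.fun_mul
        ((((((hasDerivAt_id b).const_add a).add_const c).fun_pow 3).fun_pow 2))
    unfold psiH3
    convert h using 1
    simp only [id_eq]
    field_simp
    ring
  have H3 : HasDerivAt (fun z => psiH3 a b z)
      ((2 * (c - a) / (c ^ 3 * a) + 2 * (c - b) / (c ^ 3 * b)) * ((a + b + c) ^ 3) ^ 2
        + ((a - b) ^ 2 / (a * b) ^ 2 + (a - c) ^ 2 / (a * c) ^ 2 + (b - c) ^ 2 / (b * c) ^ 2)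
          * (6 * (a + b + c) ^ 5)) c := by
    have h : HasDerivAt (fun z => ((a - b) ^ 2 / (a * b) ^ 2 + (a - z) ^ 2 / (a * z) ^ 2 + (b - z) ^ 2 / (b * z) ^ 2) * ((a + b + z) ^ 3) ^ 2) _ c := ((((((hasDerivAt_id c).const_sub a).fun_pow 2).fun_div
        (((hasDerivAt_id c).const_mul a).fun_pow 2) (by positivity)).const_add
        ((a - b) ^ 2 / (a * b) ^ 2)).fun_add
        ((((hasDerivAt_id c).const_sub b).fun_pow 2).fun_div
        (((hasDerivAt_id c).const_mul b).fun_pow 2) (by positivity))) |>.fun_mul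
        ((((hasDerivAt_id c).const_add (a + b)).fun_pow 3).fun_pow 2)
    unfold psiH3
    convert h using 1
    simp only [id_eq]
    field_simp
    ring
  have e1 : p1 psiH3 a b c = (2 * (a - b) / (a ^ 3 * b) + 2 * (a - c) / (a ^ 3 * c)) * ((a + b + c) ^ 3) ^ 2
        + ((a - b) ^ 2 / (a * b) ^ 2 + (a - c) ^ 2 / (a * c) ^ 2 + (b - c) ^ 2 / (b * c) ^ 2)
          * (6 * (a + b + c) ^ 5) := by unfold p1; exact H1.deriv
  have e2 : p2 psiH3 a b c = (2 * (b - a) / (b ^ 3 * a) + 2 * (b - c) / (b ^ 3 * c)) * ((a + b + c) ^ 3) ^ 2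
        + ((a - b) ^ 2 / (a * b) ^ 2 + (a - c) ^ 2 / (a * c) ^ 2 + (b - c) ^ 2 / (b * c) ^ 2)
          * (6 * (a + b + c) ^ 5) := by unfold p2; exact H2.deriv
  have e3 : p3 psiH3 a b c = (2 * (c - a) / (c ^ 3 * a) + 2 * (c - b) / (c ^ 3 * b)) * ((a + b + c) ^ 3) ^ 2
        + ((a - b) ^ 2 / (a * b) ^ 2 + (a - c) ^ 2 / (a * c) ^ 2 + (b - c) ^ 2 / (b * c) ^ 2)
          * (6 * (a + b + c) ^ 5) := by unfold p3; exact H3.deriv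
  have habs : a - b ≠ 0 := sub_ne_zero.2 hab
  have hacs : a - c ≠ 0 := sub_ne_zero.2 hac
  have hbcs : b - c ≠ 0 := sub_ne_zero.2 hbc
  have hN : (0:ℝ) ≤ 2 * (a^3*b^2 + a^3*c^2 + a^2*b^3 + b^3*c^2 + a^2*c^3 + b^2*c^3)
      + a*b*c*(a^2 + b^2 + c^2 - 2*a*b - 2*a*c - 2*b*c) := by
    have hid : 2 * (a^3*b^2 + a^3*c^2 + a^2*b^3 + b^3*c^2 + a^2*c^3 + b^2*c^3)
        + a*b*c*(a^2 + b^2 + c^2 - 2*a*b - 2*a*c - 2*b*c)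
        = 2*(a^3*(b-c)^2 + b^3*(a-c)^2 + c^3*(a-b)^2)
          + a*b*c*((a-b)^2 + (a-c)^2 + (b-c)^2) + 3*(a*b*c)*(a^2+b^2+c^2) := by ring
    rw [hid]
    positivity
  have hfin : -(12 * ((a + b + c) ^ 8 *
      (2 * (a^3*b^2 + a^3*c^2 + a^2*b^3 + b^3*c^2 + a^2*c^3 + b^2*c^3)
        + a*b*c*(a^2 + b^2 + c^2 - 2*a*b - 2*a*c - 2*b*c)))) / (a^3*b^3*c^3) ≤ 0 := by
    apply div_nonpos_of_nonpos_of_nonneg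
    · have h8 := mul_nonneg (show (0:ℝ) ≤ (a + b + c) ^ 8 by positivity) hN
      linarith
    · positivity
  unfold Eterm
  rw [e1, e2, e3, f1, f2, f3]
  have k1 : (((2 * (c - a) / (c ^ 3 * a) + 2 * (c - b) / (c ^ 3 * b)) * ((a + b + c) ^ 3) ^ 2
        + ((a - b) ^ 2 / (a * b) ^ 2 + (a - c) ^ 2 / (a * c) ^ 2 + (b - c) ^ 2 / (b * c) ^ 2)
          * (6 * (a + b + c) ^ 5)) * (3 * (a + b + c) ^ 2 - 3 * (a + b + c) ^ 2) - 3 * (a + b + c) ^ 2 * (((2 * (a - b) / (a ^ 3 * b) + 2 * (a - c) / (a ^ 3 * c)) * ((a + b + c) ^ 3) ^ 2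
        + ((a - b) ^ 2 / (a * b) ^ 2 + (a - c) ^ 2 / (a * c) ^ 2 + (b - c) ^ 2 / (b * c) ^ 2)
          * (6 * (a + b + c) ^ 5)) - ((2 * (b - a) / (b ^ 3 * a) + 2 * (b - c) / (b ^ 3 * c)) * ((a + b + c) ^ 3) ^ 2
        + ((a - b) ^ 2 / (a * b) ^ 2 + (a - c) ^ 2 / (a * c) ^ 2 + (b - c) ^ 2 / (b * c) ^ 2)
          * (6 * (a + b + c) ^ 5)))) / (a - b) = -6 * (a + b + c) ^ 8 * (2*a^2*c + 2*b^2*c + a*b*c - a^2*b - a*b^2) / (a^3*b^3*c) := by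
    rw [sub_self, mul_zero, zero_sub]
    field_simp
    ring
  have k2 : (((2 * (b - a) / (b ^ 3 * a) + 2 * (b - c) / (b ^ 3 * c)) * ((a + b + c) ^ 3) ^ 2
        + ((a - b) ^ 2 / (a * b) ^ 2 + (a - c) ^ 2 / (a * c) ^ 2 + (b - c) ^ 2 / (b * c) ^ 2)
          * (6 * (a + b + c) ^ 5)) * (3 * (a + b + c) ^ 2 - 3 * (a + b + c) ^ 2) - 3 * (a + b + c) ^ 2 * (((2 * (a - b) / (a ^ 3 * b) + 2 * (a - c) / (a ^ 3 * c)) * ((a + b + c) ^ 3) ^ 2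
        + ((a - b) ^ 2 / (a * b) ^ 2 + (a - c) ^ 2 / (a * c) ^ 2 + (b - c) ^ 2 / (b * c) ^ 2)
          * (6 * (a + b + c) ^ 5)) - ((2 * (c - a) / (c ^ 3 * a) + 2 * (c - b) / (c ^ 3 * b)) * ((a + b + c) ^ 3) ^ 2
        + ((a - b) ^ 2 / (a * b) ^ 2 + (a - c) ^ 2 / (a * c) ^ 2 + (b - c) ^ 2 / (b * c) ^ 2)
          * (6 * (a + b + c) ^ 5)))) / (a - c) = -6 * (a + b + c) ^ 8 * (2*a^2*b + 2*c^2*b + a*b*c - a^2*c - a*c^2) / (a^3*c^3*b) := by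
    rw [sub_self, mul_zero, zero_sub]
    field_simp
    ring
  have k3 : (((2 * (a - b) / (a ^ 3 * b) + 2 * (a - c) / (a ^ 3 * c)) * ((a + b + c) ^ 3) ^ 2
        + ((a - b) ^ 2 / (a * b) ^ 2 + (a - c) ^ 2 / (a * c) ^ 2 + (b - c) ^ 2 / (b * c) ^ 2)
          * (6 * (a + b + c) ^ 5)) * (3 * (a + b + c) ^ 2 - 3 * (a + b + c) ^ 2) - 3 * (a + b + c) ^ 2 * (((2 * (b - a) / (b ^ 3 * a) + 2 * (b - c) / (b ^ 3 * c)) * ((a + b + c) ^ 3) ^ 2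
        + ((a - b) ^ 2 / (a * b) ^ 2 + (a - c) ^ 2 / (a * c) ^ 2 + (b - c) ^ 2 / (b * c) ^ 2)
          * (6 * (a + b + c) ^ 5)) - ((2 * (c - a) / (c ^ 3 * a) + 2 * (c - b) / (c ^ 3 * b)) * ((a + b + c) ^ 3) ^ 2
        + ((a - b) ^ 2 / (a * b) ^ 2 + (a - c) ^ 2 / (a * c) ^ 2 + (b - c) ^ 2 / (b * c) ^ 2)
          * (6 * (a + b + c) ^ 5)))) / (b - c) = -6 * (a + b + c) ^ 8 * (2*b^2*a + 2*c^2*a + a*b*c - b^2*c - b*c^2) / (b^3*c^3*a) := by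
    rw [sub_self, mul_zero, zero_sub]
    field_simp
    ring
  rw [k1, k2, k3]
  refine le_of_eq_of_le ?_ hfin
  field_simp
  ring
end

section
/- Let a, b, c > 0 and define ψ_K(a,b,c) := ((a−b)²/(ab)² + (a−c)²/(ac)² + (b−c)²/(bc)²)·(abc)². Then with w = ψ_K and F(a,b,c) = abc, the constant term C_w(a,b,c) := a·w_a·(a²F_a + b²F_b + c²F_c + a(F − aF_a − bF_b − cF_c)) + b·w_b·(a²F_a + b²F_b + c²F_c + b(F − aF_a − bF_b − cF_c)) + c·w_c·(a²F_a + b²F_b + c²F_c + c(F − aF_a − bF_b − cF_c)) vanishes; that is, ψ_K is a vanishing function for the Gauss curvature K = abc. -/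
/-- `ψ_K(a,b,c) = ((a−b)²/(ab)² + (a−c)²/(ac)² + (b−c)²/(bc)²)·(abc)²`. -/
noncomputable def psiK (a b c : ℝ) : ℝ :=
  ((a - b) ^ 2 / (a * b) ^ 2 + (a - c) ^ 2 / (a * c) ^ 2 + (b - c) ^ 2 / (b * c) ^ 2) *
    (a * b * c) ^ 2

private lemma psiK_eq {a b c : ℝ} (ha : a ≠ 0) (hb : b ≠ 0) (hc : c ≠ 0) :
    psiK a b c = (a - b) ^ 2 * c ^ 2 + (a - c) ^ 2 * b ^ 2 + (b - c) ^ 2 * a ^ 2 := by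
  unfold psiK
  field_simp

private lemma deriv_sq3 (u v : ℝ) (x : ℝ) :
    deriv (fun t : ℝ => (t - u) ^ 2 * v ^ 2 + (t - v) ^ 2 * u ^ 2 + (u - v) ^ 2 * t ^ 2) x
      = 2 * (x - u) * v ^ 2 + 2 * (x - v) * u ^ 2 + (u - v) ^ 2 * (2 * x) := by
  have h1 := (((hasDerivAt_id x).sub_const u).pow 2).mul_const (v ^ 2)
  have h2 := (((hasDerivAt_id x).sub_const v).pow 2).mul_const (u ^ 2)
  have h3 := (hasDerivAt_pow 2 x).const_mul ((u - v) ^ 2)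
  have h := (h1.add h2).add h3
  simp only [id_eq, pow_one, mul_one, Nat.cast_ofNat] at h
  rw [(show HasDerivAt (fun t : ℝ => (t - u) ^ 2 * v ^ 2 + (t - v) ^ 2 * u ^ 2 + (u - v) ^ 2 * t ^ 2) _ x from h).deriv]
  norm_num

private lemma p1_psiK {a b c : ℝ} (ha : 0 < a) (hb : 0 < b) (hc : 0 < c) :
    p1 psiK a b c = 2 * (a - b) * c ^ 2 + 2 * (a - c) * b ^ 2 + (b - c) ^ 2 * (2 * a) := by
  have hev : (fun x => psiK x b c) =ᶠ[nhds a]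
      (fun x => (x - b) ^ 2 * c ^ 2 + (x - c) ^ 2 * b ^ 2 + (b - c) ^ 2 * x ^ 2) := by
    filter_upwards [eventually_ne_nhds ha.ne'] with x hx
    exact psiK_eq hx hb.ne' hc.ne'
  rw [p1, hev.deriv_eq, deriv_sq3]

private lemma p2_psiK {a b c : ℝ} (ha : 0 < a) (hb : 0 < b) (hc : 0 < c) :
    p2 psiK a b c = 2 * (b - a) * c ^ 2 + 2 * (b - c) * a ^ 2 + (a - c) ^ 2 * (2 * b) := by
  have hev : (fun y => psiK a y c) =ᶠ[nhds b]
      (fun y => (y - a) ^ 2 * c ^ 2 + (y - c) ^ 2 * a ^ 2 + (a - c) ^ 2 * y ^ 2) := by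
    filter_upwards [eventually_ne_nhds hb.ne'] with y hy
    rw [psiK_eq ha.ne' hy hc.ne']; ring
  rw [p2, hev.deriv_eq, deriv_sq3]

private lemma p3_psiK {a b c : ℝ} (ha : 0 < a) (hb : 0 < b) (hc : 0 < c) :
    p3 psiK a b c = 2 * (c - a) * b ^ 2 + 2 * (c - b) * a ^ 2 + (a - b) ^ 2 * (2 * c) := by
  have hev : (fun z => psiK a b z) =ᶠ[nhds c]
      (fun z => (z - a) ^ 2 * b ^ 2 + (z - b) ^ 2 * a ^ 2 + (a - b) ^ 2 * z ^ 2) := by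
    filter_upwards [eventually_ne_nhds hc.ne'] with z hz
    rw [psiK_eq ha.ne' hb.ne' hz]; ring
  rw [p3, hev.deriv_eq, deriv_sq3]

private lemma p1_K (a b c : ℝ) : p1 (fun a b c => a * b * c) a b c = b * c := by
  have h : (fun x => x * b * c) = fun x : ℝ => x * (b * c) := by funext x; ring
  rw [p1, h]
  simp

private lemma p2_K (a b c : ℝ) : p2 (fun a b c => a * b * c) a b c = a * c := by
  have h : (fun y => a * y * c) = fun y : ℝ => y * (a * c) := by funext y; ring
  rw [p2, h]
  simp

private lemma p3_K (a b c : ℝ) : p3 (fun a b c => a * b * c) a b c = a * b := by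
  rw [p3]
  simpa using ((hasDerivAt_id c).const_mul (a * b)).deriv

/-- `ψ_K` is a vanishing function for the Gauss curvature `K = abc`: the constant
term of the linear operator `L` for `w = ψ_K` and `F = K = abc` vanishes on the
positive orthant. -/
theorem Cterm_psiK_eq_zero (a b c : ℝ) (ha : 0 < a) (hb : 0 < b) (hc : 0 < c) :
    Cterm psiK (fun a b c => a * b * c) a b c = 0 := by
  rw [Cterm, p1_psiK ha hb hc, p2_psiK ha hb hc, p3_psiK ha hb hc,
    p1_K, p2_K, p3_K]
  ring
end
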